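/- arXiv:2305.05448 — 2 statements merged into one kernel-verified Lean document; each statement's English description precedes it below -/
import Mathlib

section
/- If (r,u) follows the weight-normalized gradient flow, then the Euclidean norm of u is conserved: ‖u(t)‖₂ = ‖u(0)‖₂ for all t ≥ 0. -/
open Filter Topology

noncomputable section

variable {M N : ℕ}

/-- Entrywise (Hadamard) natural power `x^{⊙L}`. -/
def hadPow (x : Fin N → ℝ) (L : ℕ) : Fin N → ℝ := fun n => x n ^ L

/-- Euclidean (ℓ2) norm of a vector. -/
def eucNorm (u : Fin N → ℝ) : ℝ := Real.sqrt (∑ n, u n ^ 2)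

/-- The loss `𝓛(x) = (1/(2L)) ‖A x^{⊙L} − b‖₂²`. -/
def loss (A : Matrix (Fin M) (Fin N) ℝ) (b : Fin M → ℝ) (L : ℕ) (x : Fin N → ℝ) : ℝ :=
  (1 / (2 * (L : ℝ))) * ∑ m, (A.mulVec (hadPow x L) m - b m) ^ 2

/-- The gradient `∇𝓛(x) = [Aᵀ(A x^{⊙L} − b)] ⊙ x^{⊙(L−1)}`. -/
def gradLoss (A : Matrix (Fin M) (Fin N) ℝ) (b : Fin M → ℝ) (L : ℕ) (x : Fin N → ℝ) :
    Fin N → ℝ :=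
  fun n => A.transpose.mulVec (A.mulVec (hadPow x L) - b) n * x n ^ (L - 1)

/-- The weight-normalized vector `x = (r/‖u‖₂) u`. -/
def normVec (r : ℝ) (u : Fin N → ℝ) : Fin N → ℝ := (r / eucNorm u) • u

/-- `∇_r 𝓛̃(r,u) = (uᵀ/‖u‖₂) ∇𝓛((r/‖u‖₂)u)`. -/
def gradR (A : Matrix (Fin M) (Fin N) ℝ) (b : Fin M → ℝ) (L : ℕ) (r : ℝ)
    (u : Fin N → ℝ) : ℝ :=
  ∑ n, (u n / eucNorm u) * gradLoss A b L (normVec r u) n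

/-- `∇_u 𝓛̃(r,u) = (r/‖u‖₂)(I − uuᵀ/‖u‖₂²) ∇𝓛((r/‖u‖₂)u)`. -/
def gradU (A : Matrix (Fin M) (Fin N) ℝ) (b : Fin M → ℝ) (L : ℕ) (r : ℝ)
    (u : Fin N → ℝ) : Fin N → ℝ :=
  fun n => (r / eucNorm u) * (gradLoss A b L (normVec r u) n -
    (∑ k, u k * gradLoss A b L (normVec r u) k) / eucNorm u ^ 2 * u n)

/-- Weight-normalized gradient flow with (possibly time-dependent) learning rates
`(η_r, η_u)`: `∂ₜ r = −η_r ∇_r 𝓛̃(r,u)`, `∂ₜ u = −η_u ∇_u 𝓛̃(r,u)` for `t ≥ 0`. -/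
def WNFlow (A : Matrix (Fin M) (Fin N) ℝ) (b : Fin M → ℝ) (L : ℕ)
    (ηr ηu : ℝ → ℝ) (r : ℝ → ℝ) (u : ℝ → Fin N → ℝ) : Prop :=
  (∀ t, 0 ≤ t → HasDerivAt r (-(ηr t * gradR A b L (r t) (u t))) t) ∧
  (∀ t, 0 ≤ t → ∀ n, HasDerivAt (fun s => u s n) (-(ηu t * gradU A b L (r t) (u t) n)) t)

/-- Plain gradient flow `∂ₜ x = −∇𝓛(x)` for `t ≥ 0`. -/
def GradFlow (A : Matrix (Fin M) (Fin N) ℝ) (b : Fin M → ℝ) (L : ℕ)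
    (x : ℝ → Fin N → ℝ) : Prop :=
  ∀ t, 0 ≤ t → ∀ n, HasDerivAt (fun s => x s n) (-gradLoss A b L (x t) n) t

/-- The set of nonnegative solutions `S₊ = {z ≥ 0 : Az = b}`. -/
def Splus (A : Matrix (Fin M) (Fin N) ℝ) (b : Fin M → ℝ) : Set (Fin N → ℝ) :=
  {z | (∀ n, 0 ≤ z n) ∧ A.mulVec z = b}

/-- Weighted ℓ1-norm `‖z‖_{w,1} = ‖w ⊙ z‖₁`. -/
def wl1 (w z : Fin N → ℝ) : ℝ := ∑ n, |w n * z n|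

/-- The Moore–Penrose conditions characterizing the pseudoinverse `A†`. -/
def IsMoorePenrose (A : Matrix (Fin M) (Fin N) ℝ) (Adag : Matrix (Fin N) (Fin M) ℝ) :
    Prop :=
  A * Adag * A = A ∧ Adag * A * Adag = Adag ∧
    (A * Adag).transpose = A * Adag ∧ (Adag * A).transpose = Adag * A

/-- The potential `F` defining the Bregman divergence. -/
def breF (L : ℕ) (p : Fin N → ℝ) : ℝ :=
  if L = 2 then (1 / 2) * ∑ n, (p n * Real.log (p n) - p n)
  else ((L : ℝ) / (2 * (2 - (L : ℝ)))) * ∑ n, p n ^ ((2 : ℝ) / (L : ℝ))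

/-- The gradient of the potential `F`. -/
def breGradF (L : ℕ) (q : Fin N → ℝ) : Fin N → ℝ :=
  fun n => if L = 2 then (1 / 2) * Real.log (q n)
  else (1 / (2 - (L : ℝ))) * q n ^ ((2 : ℝ) / (L : ℝ) - 1)

/-- Bregman divergence `D_F(p,q) = F(p) − F(q) − ⟨∇F(q), p − q⟩`. -/
def bregman (L : ℕ) (p q : Fin N → ℝ) : ℝ :=
  breF L p - breF L q - ∑ n, breGradF L q n * (p n - q n)

/-! The flow moves `u` along `(I - uuᵀ/‖u‖₂²) ∇𝓛`, which is orthogonal to `u`, so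
`d/dt ‖u‖₂² = 2 ⟨u, ∂ₜu⟩ = 0` and `‖u‖₂` is constant. -/

lemma eucNorm_sq (u : Fin N → ℝ) : eucNorm u ^ 2 = ∑ n, u n ^ 2 :=
  Real.sq_sqrt (Finset.sum_nonneg fun n _ => sq_nonneg (u n))

lemma eucNorm_eq_zero_iff {u : Fin N → ℝ} : eucNorm u = 0 ↔ u = 0 := by
  rw [← sq_eq_zero_iff, eucNorm_sq, Finset.sum_eq_zero_iff_of_nonneg fun n _ => sq_nonneg (u n)]
  simp [funext_iff]

lemma sum_mul_sub_orthogonalProjection_eq_zero (u g : Fin N → ℝ) :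
    ∑ n, u n * (g n - (∑ k, u k * g k) / eucNorm u ^ 2 * u n) = 0 := by
  simp only [mul_sub, Finset.sum_sub_distrib]
  rcases eq_or_ne (eucNorm u) 0 with hu | hu
  · simp [eucNorm_eq_zero_iff.1 hu]
  · have hsq : ∑ n, u n * ((∑ k, u k * g k) / eucNorm u ^ 2 * u n)
        = (∑ k, u k * g k) / eucNorm u ^ 2 * ∑ n, u n ^ 2 := by
      rw [Finset.mul_sum]
      exact Finset.sum_congr rfl fun n _ => by ring
    rw [hsq, ← eucNorm_sq]
    field_simp
    ring

lemma sum_mul_gradU (A : Matrix (Fin M) (Fin N) ℝ) (b : Fin M → ℝ) (L : ℕ) (r : ℝ)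
    (u : Fin N → ℝ) : ∑ n, u n * gradU A b L r u n = 0 := by
  simp only [gradU, mul_left_comm (u _), ← Finset.mul_sum,
    sum_mul_sub_orthogonalProjection_eq_zero, mul_zero]

lemma hasDerivAt_sum_sq {ι : Type*} [Fintype ι] {v : ℝ → ι → ℝ} {v' : ι → ℝ} {t : ℝ}
    (hv : ∀ n, HasDerivAt (fun s => v s n) (v' n) t) :
    HasDerivAt (fun s => ∑ n, v s n ^ 2) (2 * ∑ n, v t n * v' n) t := by
  rw [Finset.mul_sum]
  refine HasDerivAt.fun_sum fun n _ => ?_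
  exact ((hv n).fun_pow 2).congr_deriv (by push_cast; ring)

lemma WNFlow.hasDerivAt_sum_sq {A : Matrix (Fin M) (Fin N) ℝ} {b : Fin M → ℝ} {L : ℕ}
    {ηr ηu : ℝ → ℝ} {r : ℝ → ℝ} {u : ℝ → Fin N → ℝ} (hflow : WNFlow A b L ηr ηu r u)
    {t : ℝ} (ht : 0 ≤ t) : HasDerivAt (fun s => ∑ n, u s n ^ 2) 0 t := by
  convert _root_.hasDerivAt_sum_sq (hflow.2 t ht) using 1
  simp only [mul_neg, mul_left_comm (u t _), Finset.sum_neg_distrib, ← Finset.mul_sum,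
    sum_mul_gradU, mul_zero, neg_zero]

lemma eq_of_hasDerivAt_zero_of_nonneg {E : Type*} [NormedAddCommGroup E] [NormedSpace ℝ E]
    {f : ℝ → E} (hf : ∀ t, 0 ≤ t → HasDerivAt f 0 t) {t : ℝ} (ht : 0 ≤ t) : f t = f 0 :=
  constant_of_has_deriv_right_zero
    (fun s hs => (hf s hs.1).continuousAt.continuousWithinAt)
    (fun s hs => (hf s hs.1).hasDerivWithinAt) t ⟨ht, le_rfl⟩

theorem stmt6_general {M N : ℕ} (L : ℕ)
    (A : Matrix (Fin M) (Fin N) ℝ) (b : Fin M → ℝ)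
    (ηr ηu : ℝ → ℝ)
    (r : ℝ → ℝ) (u : ℝ → Fin N → ℝ)
    (hflow : WNFlow A b L ηr ηu r u) :
    ∀ t, 0 ≤ t → eucNorm (u t) = eucNorm (u 0) :=
  fun _ ht => congrArg Real.sqrt
    (eq_of_hasDerivAt_zero_of_nonneg (fun _ hs => hflow.hasDerivAt_sum_sq hs) ht)

theorem stmt6 {M N : ℕ} (L : ℕ)
    (A : Matrix (Fin M) (Fin N) ℝ) (b : Fin M → ℝ)
    (ηr ηu : ℝ → ℝ) (hηr : ∀ t, 0 < ηr t) (hηu : ∀ t, 0 < ηu t)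
    (r : ℝ → ℝ) (u : ℝ → Fin N → ℝ)
    (hflow : WNFlow A b L ηr ηu r u) :
    ∀ t, 0 ≤ t → eucNorm (u t) = eucNorm (u 0) :=
  stmt6_general L A b ηr ηu r u hflow

end
end

section
/- Let L ≥ 2 be an integer, A ∈ ℝ^{M×N}, and P_A = A†A. Suppose x̃⁽¹⁾, x̃⁽²⁾ : [0,∞) → ℝ^N are strictly positive entrywise and uniformly bounded above and away from zero (there exist 0 < c ≤ C with c ≤ x̃⁽ⁱ⁾_n(t) ≤ C for all i, n, t). If lim_{t→∞} A[x̃⁽¹⁾(t) − x̃⁽²⁾(t)] = 0, and additionally lim_{t→∞}(I − P_A)[log(x̃⁽¹⁾(t)) − log(x̃⁽²⁾(t))] = 0 in the case L = 2, or lim_{t→∞}(I − P_A)[(x̃⁽¹⁾(t))^{⊙(2/L − 1)} − (x̃⁽²⁾(t))^{⊙(2/L − 1)}] = 0 in the case L ≠ 2, then lim_{t→∞}[x̃⁽¹⁾(t) − x̃⁽²⁾(t)] = 0. -/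
open Filter Topology

noncomputable section

variable {M N : ℕ}

/-! With `h = x₁ - x₂` and `g = f ∘ x₁ - f ∘ x₂`, where `f` is `log` or `x ↦ x ^ p / p` with
`p = 2 / L - 1`, the mean value theorem on `[c, C]` gives `κ ‖h‖² ≤ ⟪h, g⟫` for some `κ > 0`.
Since `P = A†A` is symmetric, `⟪h, g⟫ = ⟪P h, g⟫ + ⟪h, (I - P) g⟫`; here `P h = A† (A h) → 0`,
`(I - P) g → 0`, and `h`, `g` stay bounded, so `⟪h, g⟫ → 0` and hence `h → 0`. -/

open Matrix Set

section

variable {α ι : Type*} [Fintype ι] {l : Filter α}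

lemma dotProduct_eq_mulVec_dotProduct_add_dotProduct_one_sub_mulVec [DecidableEq ι]
    {R : Type*} [CommRing R] {P : Matrix ι ι R} (hP : Pᵀ = P) (h g : ι → R) :
    h ⬝ᵥ g = P *ᵥ h ⬝ᵥ g + h ⬝ᵥ (1 - P) *ᵥ g := by
  have hvec : h ᵥ* P = P *ᵥ h := by rw [← vecMul_transpose, hP]
  rw [sub_mulVec, one_mulVec, dotProduct_sub, dotProduct_mulVec, hvec, add_sub_cancel]

lemma tendsto_dotProduct_zero_of_isBoundedUnder {u v : α → ι → ℝ} (hu : Tendsto u l (𝓝 0))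
    (hv : IsBoundedUnder (· ≤ ·) l fun t => ‖v t‖) :
    Tendsto (fun t => u t ⬝ᵥ v t) l (𝓝 0) := by
  simpa [dotProduct] using tendsto_finsetSum Finset.univ fun i _ =>
    (tendsto_pi_nhds.1 hu i).zero_mul_isBoundedUnder_le
      (hv.mono_le (Eventually.of_forall fun t => norm_le_pi_norm (v t) i))

lemma tendsto_zero_of_tendsto_dotProduct_self {h : α → ι → ℝ}
    (hh : Tendsto (fun t => h t ⬝ᵥ h t) l (𝓝 0)) : Tendsto h l (𝓝 0) := by
  refine tendsto_pi_nhds.2 fun i => squeeze_zero_norm (fun t => ?_) (by simpa using hh.sqrt)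
  refine Real.abs_le_sqrt ?_
  rw [sq]
  exact Finset.single_le_sum (f := fun j => h t j * h t j) (fun j _ => mul_self_nonneg _)
    (Finset.mem_univ i)

theorem tendsto_zero_of_mulVec_tendsto_zero_of_le_dotProduct [DecidableEq ι] {m : Type*}
    [Fintype m] (A : Matrix m ι ℝ) (Adag : Matrix ι m ℝ) (hsym : (Adag * A)ᵀ = Adag * A)
    {h g : α → ι → ℝ} {κ : ℝ} (hκ : 0 < κ) (hmono : ∀ᶠ t in l, κ * (h t ⬝ᵥ h t) ≤ h t ⬝ᵥ g t)
    (hh : IsBoundedUnder (· ≤ ·) l fun t => ‖h t‖) (hg : IsBoundedUnder (· ≤ ·) l fun t => ‖g t‖)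
    (hA : Tendsto (fun t => A *ᵥ h t) l (𝓝 0))
    (hPg : Tendsto (fun t => (1 - Adag * A) *ᵥ g t) l (𝓝 0)) :
    Tendsto h l (𝓝 0) := by
  have hPh : Tendsto (fun t => (Adag * A) *ᵥ h t) l (𝓝 0) := by
    simpa [Function.comp_def, ← mulVec_mulVec] using
      ((continuous_const.matrix_mulVec continuous_id).tendsto' 0 0 (mulVec_zero Adag)).comp hA
  have hpair : Tendsto (fun t => h t ⬝ᵥ g t) l (𝓝 0) := by
    refine Tendsto.congr (fun t =>
      (dotProduct_eq_mulVec_dotProduct_add_dotProduct_one_sub_mulVec hsym (h t) (g t)).symm) ?_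
    simpa using (tendsto_dotProduct_zero_of_isBoundedUnder hPh hg).add
      (by simpa only [dotProduct_comm] using tendsto_dotProduct_zero_of_isBoundedUnder hPg hh)
  refine tendsto_zero_of_tendsto_dotProduct_self <| squeeze_zero'
    (Eventually.of_forall fun t => Finset.sum_nonneg fun i _ => mul_self_nonneg (h t i))
    (hmono.mono fun t ht => (le_div_iff₀' hκ).2 ht) (by simpa using hpair.div_const κ)

lemma isBoundedUnder_norm_comp_sub_comp {K : Set ℝ} (hK : IsCompact K) {φ : ℝ → ℝ}
    (hφ : ContinuousOn φ K) {x₁ x₂ : α → ι → ℝ} (h₁ : ∀ᶠ t in l, ∀ i, x₁ t i ∈ K)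
    (h₂ : ∀ᶠ t in l, ∀ i, x₂ t i ∈ K) :
    IsBoundedUnder (· ≤ ·) l fun t => ‖fun i => φ (x₁ t i) - φ (x₂ t i)‖ := by
  obtain ⟨B, hB⟩ := hK.exists_bound_of_continuousOn hφ
  refine isBoundedUnder_of_eventually_le (a := 2 * max B 0) ((h₁.and h₂).mono fun t ht => ?_)
  refine (pi_norm_le_iff_of_nonneg (by positivity)).2 fun i => (norm_sub_le _ _).trans ?_
  linarith [hB _ (ht.1 i), hB _ (ht.2 i), le_max_left B 0]

end

lemma Convex.mul_sq_sub_le_mul_sub_of_le_deriv {D : Set ℝ} (hD : Convex ℝ D) {f f' : ℝ → ℝ}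
    (hf : ∀ x ∈ D, HasDerivAt f (f' x) x) {κ : ℝ} (hκ : ∀ x ∈ D, κ ≤ f' x) {a b : ℝ}
    (ha : a ∈ D) (hb : b ∈ D) : κ * (a - b) ^ 2 ≤ (a - b) * (f a - f b) := by
  wlog hab : b ≤ a generalizing a b
  · convert this hb ha (le_of_not_ge hab) using 1 <;> ring
  have hgrowth := hD.mul_sub_le_image_sub_of_le_deriv
    (fun x hx => (hf x hx).continuousAt.continuousWithinAt)
    (fun x hx => (hf x (interior_subset hx)).differentiableAt.differentiableWithinAt)
    (fun x hx => (hf x (interior_subset hx)).deriv ▸ hκ x (interior_subset hx)) b hb a ha hab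
  calc κ * (a - b) ^ 2 = (a - b) * (κ * (a - b)) := by ring
    _ ≤ (a - b) * (f a - f b) := mul_le_mul_of_nonneg_left hgrowth (sub_nonneg.2 hab)

theorem tendsto_sub_of_tendsto_one_sub_mulVec_comp_sub {α ι m : Type*} [Fintype ι]
    [DecidableEq ι] [Fintype m] {l : Filter α} (A : Matrix m ι ℝ) (Adag : Matrix ι m ℝ)
    (hsym : (Adag * A)ᵀ = Adag * A) {D : Set ℝ} (hDc : Convex ℝ D) (hDk : IsCompact D)
    {x₁ x₂ : α → ι → ℝ} (h₁ : ∀ᶠ t in l, ∀ i, x₁ t i ∈ D) (h₂ : ∀ᶠ t in l, ∀ i, x₂ t i ∈ D)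
    (hA : Tendsto (fun t => A *ᵥ (x₁ t - x₂ t)) l (𝓝 0)) (f f' : ℝ → ℝ)
    (hf : ∀ x ∈ D, HasDerivAt f (f' x) x) (hf'c : ContinuousOn f' D) (hf'pos : ∀ x ∈ D, 0 < f' x)
    (hPf : Tendsto (fun t => (1 - Adag * A) *ᵥ fun i => f (x₁ t i) - f (x₂ t i)) l (𝓝 0)) :
    Tendsto (fun t => x₁ t - x₂ t) l (𝓝 0) := by
  obtain ⟨κ, hκ, hκf'⟩ := hDk.exists_forall_le' hf'c hf'pos
  have hfc : ContinuousOn f D := fun x hx => (hf x hx).continuousAt.continuousWithinAt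
  refine tendsto_zero_of_mulVec_tendsto_zero_of_le_dotProduct A Adag hsym hκ ?_
    (isBoundedUnder_norm_comp_sub_comp hDk continuousOn_id h₁ h₂)
    (isBoundedUnder_norm_comp_sub_comp hDk hfc h₁ h₂) hA hPf
  refine (h₁.and h₂).mono fun t ht => ?_
  simp only [dotProduct, Finset.mul_sum, Pi.sub_apply]
  exact Finset.sum_le_sum fun i _ => by
    simpa only [sq] using hDc.mul_sq_sub_le_mul_sub_of_le_deriv hf hκf' (ht.1 i) (ht.2 i)

lemma two_div_sub_one_ne_zero {L : ℕ} (hL : L ≠ 2) : (2 : ℝ) / L - 1 ≠ 0 := by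
  intro h
  have h2 : (2 : ℝ) / L = 1 := by linarith
  rcases eq_or_ne (L : ℝ) 0 with hL0 | hL0
  · simp [hL0] at h2
  · exact hL (by exact_mod_cast ((div_eq_one_iff_eq hL0).1 h2).symm)

theorem stmt14_general {M N : ℕ} (L : ℕ)
    (A : Matrix (Fin M) (Fin N) ℝ)
    (Adag : Matrix (Fin N) (Fin M) ℝ) (hdag : IsMoorePenrose A Adag)
    (x1 x2 : ℝ → Fin N → ℝ)
    (c C : ℝ) (hc : 0 < c)
    (hbd1 : ∀ t, 0 ≤ t → ∀ n, c ≤ x1 t n ∧ x1 t n ≤ C)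
    (hbd2 : ∀ t, 0 ≤ t → ∀ n, c ≤ x2 t n ∧ x2 t n ≤ C)
    (hA : Tendsto (fun t => A.mulVec (x1 t - x2 t)) atTop (𝓝 0))
    (hlog : L = 2 → Tendsto (fun t => (1 - Adag * A).mulVec
      (fun n => Real.log (x1 t n) - Real.log (x2 t n))) atTop (𝓝 0))
    (hpow : L ≠ 2 → Tendsto (fun t => (1 - Adag * A).mulVec
      (fun n => x1 t n ^ ((2 : ℝ) / (L : ℝ) - 1) - x2 t n ^ ((2 : ℝ) / (L : ℝ) - 1)))
      atTop (𝓝 0)) :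
    Tendsto (fun t => x1 t - x2 t) atTop (𝓝 0) := by
  have hmem {x : ℝ → Fin N → ℝ} (hx : ∀ t, 0 ≤ t → ∀ n, c ≤ x t n ∧ x t n ≤ C) :
      ∀ᶠ t in atTop, ∀ n, x t n ∈ Icc c C :=
    (eventually_ge_atTop 0).mono fun t ht n => hx t ht n
  have hpos : ∀ x ∈ Icc c C, 0 < x := fun x hx => hc.trans_le hx.1
  have hlimit := tendsto_sub_of_tendsto_one_sub_mulVec_comp_sub A Adag hdag.2.2.2
    (convex_Icc c C) isCompact_Icc (hmem hbd1) (hmem hbd2) hA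
  by_cases hL : L = 2
  · exact hlimit Real.log (·⁻¹) (fun x hx => Real.hasDerivAt_log (hpos x hx).ne')
      (continuousOn_inv₀.mono fun x hx => (hpos x hx).ne') (fun x hx => inv_pos.2 (hpos x hx))
      (hlog hL)
  · set p : ℝ := 2 / L - 1
    have hp : p ≠ 0 := two_div_sub_one_ne_zero hL
    -- dividing by `p` makes the derivative `x ^ (p - 1)` positive whatever the sign of `p`
    refine hlimit (fun x => x ^ p / p) (fun x => x ^ (p - 1))
      (fun x hx => ((Real.hasDerivAt_rpow_const (Or.inl (hpos x hx).ne')).div_const p).congr_deriv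
        (by field_simp))
      (continuousOn_id.rpow_const fun x hx => Or.inl (hpos x hx).ne')
      (fun x hx => Real.rpow_pos_of_pos (hpos x hx) _) ?_
    have hscaled := (hpow hL).const_smul p⁻¹
    rw [smul_zero] at hscaled
    refine hscaled.congr fun t => ?_
    rw [← mulVec_smul]
    congr 1
    ext n
    simp [div_eq_inv_mul, mul_sub]

theorem stmt14 {M N : ℕ} (L : ℕ) (hL : 2 ≤ L)
    (A : Matrix (Fin M) (Fin N) ℝ)
    (Adag : Matrix (Fin N) (Fin M) ℝ) (hdag : IsMoorePenrose A Adag)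
    (x1 x2 : ℝ → Fin N → ℝ)
    (c C : ℝ) (hc : 0 < c) (hcC : c ≤ C)
    (hbd1 : ∀ t, 0 ≤ t → ∀ n, c ≤ x1 t n ∧ x1 t n ≤ C)
    (hbd2 : ∀ t, 0 ≤ t → ∀ n, c ≤ x2 t n ∧ x2 t n ≤ C)
    (hA : Tendsto (fun t => A.mulVec (x1 t - x2 t)) atTop (𝓝 0))
    (hlog : L = 2 → Tendsto (fun t => (1 - Adag * A).mulVec
      (fun n => Real.log (x1 t n) - Real.log (x2 t n))) atTop (𝓝 0))
    (hpow : L ≠ 2 → Tendsto (fun t => (1 - Adag * A).mulVec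
      (fun n => x1 t n ^ ((2 : ℝ) / (L : ℝ) - 1) - x2 t n ^ ((2 : ℝ) / (L : ℝ) - 1)))
      atTop (𝓝 0)) :
    Tendsto (fun t => x1 t - x2 t) atTop (𝓝 0) :=
  stmt14_general L A Adag hdag x1 x2 c C hc hbd1 hbd2 hA hlog hpow
end
end
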